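/- arXiv:2605.19042 — 2 statements merged into one kernel-verified Lean document; each statement's English description precedes it below -/
import Mathlib

section
/- Let H be a symmetric positive definite n×n real matrix, let θ_r, g, v ∈ ℝⁿ, let c, c' ∈ ℝ, and let ρ > 0. Define L_r(θ) = ½·(θ − θ_r)ᵀ H (θ − θ_r), L_f(θ) = gᵀθ + c, and ℓ(θ) = vᵀθ + c'. If θ* ∈ ℝⁿ satisfies ∇(L_r + ρ·L_f)(θ*) = 0, then ℓ(θ_r) − ℓ(θ*) = ρ·vᵀH⁻¹g. -/
/-! The gradient of `L_r + ρ L_f` at `θ` is `H (θ - θ_r) + ρ g`, so a critical point satisfies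
`θ_r - θ* = ρ H⁻¹ g`; since `ℓ` is affine, `ℓ(θ_r) - ℓ(θ*) = ⟪v, θ_r - θ*⟫`. -/

open scoped RealInnerProductSpace

section Gradient

variable {F : Type*} [NormedAddCommGroup F] [InnerProductSpace ℝ F] [CompleteSpace F]
  {f₁ f₂ : F → ℝ} {f₁' f₂' x : F}

theorem HasGradientAt.add (h₁ : HasGradientAt f₁ f₁' x) (h₂ : HasGradientAt f₂ f₂' x) :
    HasGradientAt (fun y => f₁ y + f₂ y) (f₁' + f₂') x := by
  rw [hasGradientAt_iff_hasFDerivAt, map_add]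
  exact h₁.hasFDerivAt.add h₂.hasFDerivAt

theorem HasGradientAt.const_mul (c : ℝ) (h : HasGradientAt f₁ f₁' x) :
    HasGradientAt (fun y => c * f₁ y) (c • f₁') x := by
  rw [hasGradientAt_iff_hasFDerivAt, map_smulₛₗ, starRingEnd_apply, star_trivial]
  exact h.hasFDerivAt.const_mul c

theorem hasGradientAt_inner_add_const (u : F) (c : ℝ) :
    HasGradientAt (fun y => ⟪u, y⟫ + c) u x := by
  rw [hasGradientAt_iff_hasFDerivAt]
  exact (InnerProductSpace.toDual ℝ F u).hasFDerivAt.add_const c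

theorem LinearMap.IsSymmetric.hasGradientAt_half_inner_sub_apply_sub {A : F →ₗ[ℝ] F}
    (hA : A.IsSymmetric) (a : F) :
    HasGradientAt (fun y => (1 / 2) * ⟪y - a, A (y - a)⟫) (A (x - a)) x := by
  set T : F →L[ℝ] F := ⟨A, hA.continuous⟩
  have hsub : HasFDerivAt (fun y : F => y - a) (ContinuousLinearMap.id ℝ F) x :=
    (hasFDerivAt_id x).sub_const a
  have hT : HasFDerivAt (fun y : F => T (y - a)) T x := T.hasFDerivAt.comp x hsub
  rw [hasGradientAt_iff_hasFDerivAt]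
  refine ((hsub.inner ℝ hT).const_mul (1 / 2)).congr_fderiv ?_
  ext y
  have hsymm : ⟪x - a, A y⟫ = ⟪y, A (x - a)⟫ := by rw [← hA, real_inner_comm]
  simp only [_root_.smul_apply, ContinuousLinearMap.comp_apply,
    ContinuousLinearMap.prod_apply, fderivInnerCLM_apply, ContinuousLinearMap.id_apply,
    InnerProductSpace.toDual_apply_apply, smul_eq_mul]
  change 1 / 2 * (⟪x - a, A y⟫ + ⟪y, A (x - a)⟫) = ⟪A (x - a), y⟫
  rw [hsymm, real_inner_comm]
  ring

end Gradient

theorem Matrix.toEuclideanLin_inv_apply_toEuclideanLin {n : Type*} [Fintype n] [DecidableEq n]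
    {H : Matrix n n ℝ} (hH : IsUnit H) (x : EuclideanSpace ℝ n) :
    toEuclideanLin H⁻¹ (toEuclideanLin H x) = x := by
  simp [toLpLin_apply, mulVec_mulVec, nonsing_inv_mul H ((isUnit_iff_isUnit_det H).mp hH)]

theorem loss_change_first_order_general {n : ℕ}
    (H : Matrix (Fin n) (Fin n) ℝ) (hpd : H.PosDef)
    (θr g v : EuclideanSpace ℝ (Fin n)) (c c' ρ : ℝ)
    (Lr Lf ℓ : EuclideanSpace ℝ (Fin n) → ℝ)
    (hLr : Lr = fun θ => (1 / 2) * ⟪θ - θr, Matrix.toEuclideanLin H (θ - θr)⟫)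
    (hLf : Lf = fun θ => ⟪g, θ⟫ + c)
    (hℓ : ℓ = fun θ => ⟪v, θ⟫ + c')
    (θs : EuclideanSpace ℝ (Fin n))
    (hcrit : gradient (fun θ => Lr θ + ρ * Lf θ) θs = 0) :
    ℓ θr - ℓ θs = ρ * ⟪v, Matrix.toEuclideanLin H⁻¹ g⟫ := by
  subst hLr hLf hℓ
  have hsymm : (Matrix.toEuclideanLin H).IsSymmetric :=
    Matrix.isSymmetric_toEuclideanLin_iff.mpr hpd.isHermitian
  have hgrad : HasGradientAt (fun θ => (1 / 2) * ⟪θ - θr, Matrix.toEuclideanLin H (θ - θr)⟫ +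
      ρ * (⟪g, θ⟫ + c)) (Matrix.toEuclideanLin H (θs - θr) + ρ • g) θs :=
    (hsymm.hasGradientAt_half_inner_sub_apply_sub θr).add
      ((hasGradientAt_inner_add_const g c).const_mul ρ)
  have hstat : Matrix.toEuclideanLin H (θr - θs) = ρ • g := by
    rw [← neg_sub, map_neg, neg_eq_iff_add_eq_zero, ← hcrit, hgrad.gradient]
  have hshift : θr - θs = ρ • Matrix.toEuclideanLin H⁻¹ g := by
    rw [← map_smul, ← hstat, Matrix.toEuclideanLin_inv_apply_toEuclideanLin hpd.isUnit]
  calc (⟪v, θr⟫ + c') - (⟪v, θs⟫ + c') = ⟪v, θr - θs⟫ := by rw [inner_sub_right]; ring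
    _ = ρ * ⟪v, Matrix.toEuclideanLin H⁻¹ g⟫ := by rw [hshift, real_inner_smul_right]

/-- Exact form of Theorem 1 (interference in multi-task unlearning): with
`L_r(θ) = ½ (θ-θ_r)ᵀ H (θ-θ_r)` (`H` symmetric positive definite),
`L_f(θ) = gᵀθ + c`, `ℓ(θ) = vᵀθ + c'`, and `θ*` a critical point of `L_r + ρ·L_f`,
the induced loss change is `ℓ(θ_r) − ℓ(θ*) = ρ·vᵀH⁻¹g`. -/
theorem loss_change_first_order {n : ℕ}
    (H : Matrix (Fin n) (Fin n) ℝ) (hsymm : H.IsSymm) (hpd : H.PosDef)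
    (θr g v : EuclideanSpace ℝ (Fin n)) (c c' ρ : ℝ) (hρ : 0 < ρ)
    (Lr Lf ℓ : EuclideanSpace ℝ (Fin n) → ℝ)
    (hLr : Lr = fun θ => (1 / 2) * ⟪θ - θr, Matrix.toEuclideanLin H (θ - θr)⟫)
    (hLf : Lf = fun θ => ⟪g, θ⟫ + c)
    (hℓ : ℓ = fun θ => ⟪v, θ⟫ + c')
    (θs : EuclideanSpace ℝ (Fin n))
    (hcrit : gradient (fun θ => Lr θ + ρ * Lf θ) θs = 0) :
    ℓ θr - ℓ θs = ρ * ⟪v, Matrix.toEuclideanLin H⁻¹ g⟫ :=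
  loss_change_first_order_general H hpd θr g v c c' ρ Lr Lf ℓ hLr hLf hℓ θs hcrit
end

section
/- Let G ∈ ℝ^{k×r} and G' ∈ ℝ^{k×r} be real matrices, let U ∈ ℝ^{r×s} and U' ∈ ℝ^{r×s'} have orthonormal columns (UᵀU = I_s and U'ᵀU' = I_{s'}), and set P = UUᵀ and P' = U'U'ᵀ. If ‖UᵀU'‖₂ ≤ γ for some γ ≥ 0, where ‖·‖₂ denotes the spectral (operator) norm, then |⟨G·P, G'·P'⟩_F| ≤ γ·‖G‖_F·‖G'‖_F, where ⟨A, B⟩_F = tr(AᵀB) is the Frobenius inner product and ‖·‖_F the Frobenius norm. -/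
open Matrix

/-- Frobenius inner product `⟨A, B⟩_F = tr(AᵀB)`. -/
noncomputable def frobInner {k r : ℕ} (A B : Matrix (Fin k) (Fin r) ℝ) : ℝ :=
  (Aᵀ * B).trace

/-- Frobenius norm `‖A‖_F = √tr(AᵀA)`. -/
noncomputable def frobNorm {k r : ℕ} (A : Matrix (Fin k) (Fin r) ℝ) : ℝ :=
  Real.sqrt (frobInner A A)

/-- Spectral (ℓ²-operator) norm of a matrix, i.e. its largest singular value. -/
noncomputable def specNorm {a b : ℕ} (M : Matrix (Fin a) (Fin b) ℝ) : ℝ :=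
  ‖LinearMap.toContinuousLinearMap (Matrix.toEuclideanLin M)‖

lemma frobInner_eq_sum {k r : ℕ} (A B : Matrix (Fin k) (Fin r) ℝ) :
    frobInner A B = ∑ i, ∑ j, A i j * B i j := by
  simp only [frobInner, Matrix.trace, Matrix.diag, Matrix.mul_apply,
    Matrix.transpose_apply]
  rw [Finset.sum_comm]

lemma frobInner_self_nonneg {k r : ℕ} (A : Matrix (Fin k) (Fin r) ℝ) :
    0 ≤ frobInner A A := by
  rw [frobInner_eq_sum]
  exact Finset.sum_nonneg fun i _ => Finset.sum_nonneg fun j _ => mul_self_nonneg _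

lemma frobNorm_nonneg {k r : ℕ} (A : Matrix (Fin k) (Fin r) ℝ) :
    0 ≤ frobNorm A := Real.sqrt_nonneg _

lemma frobNorm_sq {k r : ℕ} (A : Matrix (Fin k) (Fin r) ℝ) :
    frobNorm A ^ 2 = frobInner A A := by
  rw [frobNorm, Real.sq_sqrt (frobInner_self_nonneg A)]

/-- Cauchy–Schwarz for the Frobenius inner product. -/
lemma abs_frobInner_le {k r : ℕ} (A B : Matrix (Fin k) (Fin r) ℝ) :
    |frobInner A B| ≤ frobNorm A * frobNorm B := by
  have h := Finset.sum_mul_sq_le_sq_mul_sq (Finset.univ : Finset (Fin k × Fin r))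
    (fun p => A p.1 p.2) (fun p => B p.1 p.2)
  simp only [Fintype.sum_prod_type] at h
  have hA : frobInner A A = ∑ i, ∑ j, A i j ^ 2 := by
    rw [frobInner_eq_sum]; simp [sq]
  have hB : frobInner B B = ∑ i, ∑ j, B i j ^ 2 := by
    rw [frobInner_eq_sum]; simp [sq]
  calc |frobInner A B| = Real.sqrt ((frobInner A B) ^ 2) := (Real.sqrt_sq_eq_abs _).symm
    _ ≤ Real.sqrt ((∑ i, ∑ j, A i j ^ 2) * ∑ i, ∑ j, B i j ^ 2) := by
        apply Real.sqrt_le_sqrt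
        rw [frobInner_eq_sum]
        exact h
    _ = frobNorm A * frobNorm B := by
        rw [Real.sqrt_mul (by positivity)]
        rw [frobNorm, frobNorm, hA, hB]

/-- The operator-norm bound on `mulVec`, in sum-of-squares form. -/
lemma mulVec_sq_sum_le {a b : ℕ} (M : Matrix (Fin a) (Fin b) ℝ) (v : Fin b → ℝ) :
    ∑ j, (M.mulVec v j) ^ 2 ≤ specNorm M ^ 2 * ∑ l, (v l) ^ 2 := by
  set x : EuclideanSpace ℝ (Fin b) := (WithLp.equiv 2 (Fin b → ℝ)).symm v with hx
  have hnx : ‖x‖ ^ 2 = ∑ l, (v l) ^ 2 := by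
    rw [EuclideanSpace.norm_eq]
    rw [Real.sq_sqrt (by positivity)]
    simp [hx, sq_abs]
  have happ : Matrix.toEuclideanLin M x = (WithLp.equiv 2 (Fin a → ℝ)).symm (M.mulVec v) := by
    simp [hx, Matrix.toEuclideanLin_apply]
  have hny : ‖Matrix.toEuclideanLin M x‖ ^ 2 = ∑ j, (M.mulVec v j) ^ 2 := by
    rw [happ, EuclideanSpace.norm_eq, Real.sq_sqrt (by positivity)]
    simp [sq_abs]
  have hb : ‖Matrix.toEuclideanLin M x‖ ≤ specNorm M * ‖x‖ := by
    have := (LinearMap.toContinuousLinearMap (Matrix.toEuclideanLin M)).le_opNorm x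
    simpa [specNorm] using this
  calc ∑ j, (M.mulVec v j) ^ 2 = ‖Matrix.toEuclideanLin M x‖ ^ 2 := hny.symm
    _ ≤ (specNorm M * ‖x‖) ^ 2 := by
        apply pow_le_pow_left₀ (norm_nonneg _) hb
    _ = specNorm M ^ 2 * ∑ l, (v l) ^ 2 := by rw [mul_pow, hnx]

/-- `‖B Mᵀ‖_F ≤ ‖M‖₂ ‖B‖_F`. -/
lemma frobNorm_mul_transpose_le {k a b : ℕ} (B : Matrix (Fin k) (Fin b) ℝ)
    (M : Matrix (Fin a) (Fin b) ℝ) :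
    frobNorm (B * Mᵀ) ≤ specNorm M * frobNorm B := by
  have key : frobInner (B * Mᵀ) (B * Mᵀ) ≤ specNorm M ^ 2 * frobInner B B := by
    rw [frobInner_eq_sum, frobInner_eq_sum]
    have hrow : ∀ i : Fin k, ∑ j, (B * Mᵀ) i j * (B * Mᵀ) i j
        ≤ specNorm M ^ 2 * ∑ l, B i l * B i l := by
      intro i
      have hident : ∀ j, (B * Mᵀ) i j = M.mulVec (fun l => B i l) j := by
        intro j
        simp [Matrix.mul_apply, Matrix.mulVec, dotProduct, Matrix.transpose_apply, mul_comm]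
      calc ∑ j, (B * Mᵀ) i j * (B * Mᵀ) i j = ∑ j, (M.mulVec (fun l => B i l) j) ^ 2 := by
            simp_rw [hident, sq]
        _ ≤ specNorm M ^ 2 * ∑ l, (B i l) ^ 2 := mulVec_sq_sum_le M _
        _ = specNorm M ^ 2 * ∑ l, B i l * B i l := by simp_rw [sq]
    calc ∑ i, ∑ j, (B * Mᵀ) i j * (B * Mᵀ) i j
        ≤ ∑ i, specNorm M ^ 2 * ∑ l, B i l * B i l :=
          Finset.sum_le_sum (fun i _ => hrow i)
      _ = specNorm M ^ 2 * ∑ i, ∑ l, B i l * B i l := by rw [Finset.mul_sum]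
  have h0 : (0:ℝ) ≤ specNorm M := norm_nonneg _
  rw [frobNorm]
  calc Real.sqrt (frobInner (B * Mᵀ) (B * Mᵀ))
      ≤ Real.sqrt (specNorm M ^ 2 * frobInner B B) := Real.sqrt_le_sqrt key
    _ = specNorm M * frobNorm B := by
        rw [Real.sqrt_mul (by positivity), Real.sqrt_sq h0, frobNorm]

/-- Multiplying on the right by a matrix with orthonormal columns does not
increase the Frobenius norm. -/
lemma frobNorm_mul_orthonormal_le {k r s : ℕ} (G : Matrix (Fin k) (Fin r) ℝ)
    (U : Matrix (Fin r) (Fin s) ℝ) (hU : Uᵀ * U = 1) :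
    frobNorm (G * U) ≤ frobNorm G := by
  set Q : Matrix (Fin r) (Fin r) ℝ := 1 - U * Uᵀ with hQ
  have hQt : Qᵀ = Q := by
    simp [hQ, Matrix.transpose_sub, Matrix.transpose_mul]
  have hQQ : Q * Q = Q := by
    simp only [hQ, Matrix.sub_mul, Matrix.mul_sub, Matrix.one_mul, Matrix.mul_one]
    have : U * Uᵀ * (U * Uᵀ) = U * Uᵀ := by
      rw [Matrix.mul_assoc, ← Matrix.mul_assoc Uᵀ, hU, Matrix.one_mul]
    rw [this]
    abel
  have htr1 : frobInner (G * U) (G * U) = ((Gᵀ * G) * (U * Uᵀ)).trace := by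
    rw [frobInner, Matrix.transpose_mul]
    rw [show Uᵀ * Gᵀ * (G * U) = Uᵀ * (Gᵀ * G * U) by simp only [Matrix.mul_assoc]]
    rw [Matrix.trace_mul_comm]
    rw [Matrix.mul_assoc (Gᵀ * G)]
  have htr2 : frobInner (G * Q) (G * Q) = (Gᵀ * G).trace - ((Gᵀ * G) * (U * Uᵀ)).trace := by
    rw [frobInner, Matrix.transpose_mul, hQt]
    rw [show Q * Gᵀ * (G * Q) = Q * (Gᵀ * G * Q) by simp only [Matrix.mul_assoc]]
    rw [Matrix.trace_mul_comm, Matrix.mul_assoc, hQQ]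
    rw [hQ, Matrix.mul_sub, Matrix.mul_one, Matrix.trace_sub]
  have hsum : frobInner (G * U) (G * U) ≤ frobInner G G := by
    have h0 := frobInner_self_nonneg (G * Q)
    rw [htr2] at h0
    rw [htr1, frobInner]
    linarith
  exact Real.sqrt_le_sqrt hsum

/-- Theorem 2 (task-level interference reduction): for orthonormal frames `U, U'`
with projectors `P = UUᵀ`, `P' = U'U'ᵀ` and `‖UᵀU'‖₂ ≤ γ`, the projected gradients
satisfy `|⟨G·P, G'·P'⟩_F| ≤ γ·‖G‖_F·‖G'‖_F`. -/
theorem task_projection_interference {k r s s' : ℕ}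
    (G G' : Matrix (Fin k) (Fin r) ℝ)
    (U : Matrix (Fin r) (Fin s) ℝ) (U' : Matrix (Fin r) (Fin s') ℝ)
    (hU : Uᵀ * U = 1) (hU' : U'ᵀ * U' = 1)
    (P P' : Matrix (Fin r) (Fin r) ℝ) (hP : P = U * Uᵀ) (hP' : P' = U' * U'ᵀ)
    (γ : ℝ) (hγ : 0 ≤ γ) (halign : specNorm (Uᵀ * U') ≤ γ) :
    |frobInner (G * P) (G' * P')| ≤ γ * frobNorm G * frobNorm G' := by
  subst hP hP'
  set M : Matrix (Fin s) (Fin s') ℝ := Uᵀ * U' with hM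
  have hkey : frobInner (G * (U * Uᵀ)) (G' * (U' * U'ᵀ))
      = frobInner (G * U) ((G' * U') * Mᵀ) := by
    simp only [frobInner, hM, Matrix.transpose_mul, Matrix.transpose_transpose,
      Matrix.mul_assoc]
    rw [Matrix.trace_mul_comm]
    simp only [Matrix.mul_assoc]
  rw [hkey]
  have h1 : |frobInner (G * U) ((G' * U') * Mᵀ)|
      ≤ frobNorm (G * U) * frobNorm ((G' * U') * Mᵀ) := abs_frobInner_le _ _
  have h2 : frobNorm ((G' * U') * Mᵀ) ≤ specNorm M * frobNorm (G' * U') :=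
    frobNorm_mul_transpose_le _ _
  have h3 : frobNorm (G * U) ≤ frobNorm G := frobNorm_mul_orthonormal_le G U hU
  have h4 : frobNorm (G' * U') ≤ frobNorm G' := frobNorm_mul_orthonormal_le G' U' hU'
  have hspec : (0:ℝ) ≤ specNorm M := norm_nonneg _
  calc |frobInner (G * U) ((G' * U') * Mᵀ)|
      ≤ frobNorm (G * U) * frobNorm ((G' * U') * Mᵀ) := h1
    _ ≤ frobNorm G * (specNorm M * frobNorm (G' * U')) := by
        apply mul_le_mul h3 h2 (frobNorm_nonneg _) (frobNorm_nonneg _)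
    _ ≤ frobNorm G * (γ * frobNorm G') := by
        apply mul_le_mul_of_nonneg_left _ (frobNorm_nonneg _)
        exact mul_le_mul halign h4 (frobNorm_nonneg _) hγ
    _ = γ * frobNorm G * frobNorm G' := by ring
end
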